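/- Fix an integer n ≥ 2 and reals b₁ > b₂ ≥ … ≥ bₙ > 0, and fix r₂, …, rₙ > 0. Then τ₁(r₁, r₂, …, rₙ) tends to 2π/b₁ as r₁ → 0⁺. -/

import Mathlib

/-!
Write `ψ(τ, r) = Σ rᵢ²/2 · P(bᵢ, τ)` with `P(β, τ) = 3τ − βτ² cot(βτ/2) − sin(βτ)/β`. For
`x = βτ/2` one has `β sin x · P(β, τ) = 6x sin x − 4x² cos x − 2 sin² x cos x`, which is positive on
`(0, π)`; hence `ψ(·, r) > 0` on `(0, 2π/b₁)`, and `τ₁(r) > 2π/b₁` for every `r`.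

Conversely `P(b₁, τ) → −∞` as `τ → (2π/b₁)⁺`, while the terms with `i ≥ 2` stay continuous and
positive up to `2π/b₂ > 2π/b₁`. For `t` slightly beyond `2π/b₁` the tail `Σ_{i ≥ 2}` is positive at
`t`, so `ψ(t, r) > 0` once `r₁` is small, and the intermediate value theorem puts a zero of
`ψ(·, r)` in `(2π/b₁, t]`.
-/

open Real Finset Set Filter

noncomputable def psiSum (n : ℕ) (b r : ℕ → ℝ) (τ : ℝ) : ℝ :=
  ∑ i ∈ Finset.Icc 1 n, (r i) ^ 2 / 2 *
    (3 * τ - b i * τ ^ 2 * Real.cos (b i * τ / 2) / Real.sin (b i * τ / 2) -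
      Real.sin (b i * τ) / b i)

open Topology

noncomputable def psiTerm (β τ : ℝ) : ℝ :=
  3 * τ - β * τ ^ 2 * cos (β * τ / 2) / sin (β * τ / 2) - sin (β * τ) / β

/-- `τ₁(r)` is the least element of this set. -/
def psiZeroSet (n : ℕ) (b r : ℕ → ℝ) : Set ℝ :=
  {τ | 0 < τ ∧ (∀ i ∈ Finset.Icc 1 n, sin (b i * τ / 2) ≠ 0) ∧ psiSum n b r τ = 0}

theorem psiSum_eq_sum_psiTerm (n : ℕ) (b r : ℕ → ℝ) (τ : ℝ) :
    psiSum n b r τ = ∑ i ∈ Finset.Icc 1 n, r i ^ 2 / 2 * psiTerm (b i) τ :=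
  rfl

/-- The derivative of `tan x - x - x ^ 3 / 3` is `tan x ^ 2 - x ^ 2 > 0`. -/
theorem add_pow_three_div_three_lt_tan {x : ℝ} (h0 : 0 < x) (h1 : x < π / 2) :
    x + x ^ 3 / 3 < tan x := by
  have hcos : ∀ y ∈ Ico 0 (π / 2), 0 < cos y := fun y hy =>
    cos_pos_of_mem_Ioo ⟨by linarith [hy.1, pi_pos], hy.2⟩
  have hmono : StrictMonoOn (fun y => tan y - (y + y ^ 3 / 3)) (Ico 0 (π / 2)) := by
    refine strictMonoOn_of_deriv_pos (convex_Ico _ _) ?_ fun y hy => ?_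
    · exact (continuousOn_tan.mono fun y hy => (hcos y hy).ne').sub (by fun_prop)
    rw [interior_Ico] at hy
    have hc := (hcos y (Ioo_subset_Ico_self hy)).ne'
    have hderiv : HasDerivAt (fun y => tan y - (y + y ^ 3 / 3)) (tan y ^ 2 - y ^ 2) y := by
      refine ((hasDerivAt_tan hc).sub
        ((hasDerivAt_id y).add ((hasDerivAt_pow 3 y).div_const 3))).congr_deriv ?_
      rw [tan_eq_sin_div_cos]
      field_simp
      linear_combination -3 * sin_sq_add_cos_sq y
    rw [hderiv.deriv, sub_pos]
    exact pow_lt_pow_left₀ (lt_tan hy.1 hy.2) hy.1.le two_ne_zero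
  simpa using hmono (left_mem_Ico.2 (by positivity)) ⟨h0.le, h1⟩ h0

/-- Since `tan x > x + x ^ 3 / 3` and `sin x < x`, the expression divided by `cos x` exceeds
`2 x ^ 4` when `x < π / 2`; beyond `π / 2` every term is nonnegative. -/
theorem psiTerm_numerator_pos {x : ℝ} (h0 : 0 < x) (hπ : x < π) :
    0 < 6 * x * sin x - 4 * x ^ 2 * cos x - 2 * sin x ^ 2 * cos x := by
  have hsin : 0 < sin x := sin_pos_of_pos_of_lt_pi h0 hπ
  rcases le_or_gt (cos x) 0 with hcos | hcos
  · nlinarith [mul_pos h0 hsin, sq_nonneg (sin x)]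
  have hx : x < π / 2 := by
    by_contra! h
    linarith [cos_nonpos_of_pi_div_two_le_of_le h (by linarith [pi_pos])]
  have htan := add_pow_three_div_three_lt_tan h0 hx
  have hsin_lt : sin x < x := sin_lt h0
  have hsin_eq : sin x = cos x * tan x := by rw [tan_eq_sin_div_cos]; field_simp
  have hdiv : 0 < 6 * x * tan x - 4 * x ^ 2 - 2 * sin x ^ 2 := by
    nlinarith [mul_lt_mul_of_pos_left htan (by linarith : (0 : ℝ) < 6 * x),
      mul_pos (sub_pos.2 hsin_lt) (by positivity : (0 : ℝ) < x + sin x), pow_pos h0 4]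
  nlinarith [mul_pos hcos hdiv]

theorem psiTerm_pos {β τ : ℝ} (hβ : 0 < β) (hτ : 0 < τ) (h2π : β * τ < 2 * π) :
    0 < psiTerm β τ := by
  set x := β * τ / 2 with hx
  have hsin : 0 < sin x := sin_pos_of_pos_of_lt_pi (by positivity) (by linarith)
  have hsin_two_mul : sin (β * τ) = 2 * sin x * cos x := by rw [← sin_two_mul, hx]; ring_nf
  have heq : psiTerm β τ =
      (6 * x * sin x - 4 * x ^ 2 * cos x - 2 * sin x ^ 2 * cos x) / (β * sin x) := by
    rw [psiTerm, hsin_two_mul, ← hx]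
    field_simp
    ring
  rw [heq]
  exact div_pos (psiTerm_numerator_pos (by positivity) (by linarith)) (by positivity)

theorem continuousAt_psiTerm {β τ : ℝ} (h : sin (β * τ / 2) ≠ 0) :
    ContinuousAt (psiTerm β) τ := by
  unfold psiTerm
  fun_prop (disch := exact h)

/-- The cotangent in `psiTerm β` has a pole at `2π / β`, where `cot → +∞` from the right. -/
theorem tendsto_psiTerm_nhdsGT_atBot {β : ℝ} (hβ : 0 < β) :
    Tendsto (psiTerm β) (𝓝[>] (2 * π / β)) atBot := by
  set c := 2 * π / β
  have hc : β * c / 2 = π := by simp only [c]; field_simp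
  have hcpos : 0 < c := by positivity
  have hsin : Tendsto (fun τ => sin (β * τ / 2)) (𝓝[>] c) (𝓝[<] 0) := by
    refine tendsto_nhdsWithin_of_tendsto_nhds_of_eventually_within _ ?_ ?_
    · have := tendsto_nhdsWithin_of_tendsto_nhds (s := Ioi c)
        ((by fun_prop : Continuous fun τ => sin (β * τ / 2)).tendsto c)
      rwa [hc, sin_pi] at this
    · filter_upwards [Ioo_mem_nhdsGT (by linarith : c < 2 * c)] with τ hτ
      have h1 : π < β * τ / 2 := by rw [← hc]; gcongr; exact hτ.1
      have h2 : β * τ / 2 < 2 * π := by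
        have := mul_lt_mul_of_pos_left hτ.2 hβ; linarith
      have := sin_pos_of_pos_of_lt_pi (x := β * τ / 2 - π) (by linarith) (by linarith)
      rwa [sin_sub_pi, neg_pos] at this
  have hnum : Tendsto (fun τ => β * τ ^ 2 * cos (β * τ / 2)) (𝓝[>] c) (𝓝 (-(β * c ^ 2))) := by
    have := tendsto_nhdsWithin_of_tendsto_nhds (s := Ioi c)
      ((by fun_prop : Continuous fun τ => β * τ ^ 2 * cos (β * τ / 2)).tendsto c)
    rwa [hc, cos_pi, mul_neg_one] at this
  have hcot := hnum.neg_mul_atBot (by simp only [neg_lt_zero]; positivity)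
    (tendsto_inv_nhdsLT_zero.comp hsin)
  have hrest : Tendsto (fun τ => 3 * τ - sin (β * τ) / β) (𝓝[>] c) (𝓝 (3 * c - sin (β * c) / β)) :=
    tendsto_nhdsWithin_of_tendsto_nhds
      ((by fun_prop : Continuous fun τ => 3 * τ - sin (β * τ) / β).tendsto c)
  refine (hrest.add_atBot (tendsto_neg_atTop_atBot.comp hcot)).congr fun τ => ?_
  simp only [psiTerm, Function.comp_apply, div_eq_mul_inv]
  ring

theorem sin_half_ne_zero {x : ℝ} (h0 : 0 < x) (h4π : x < 4 * π) (h2π : x ≠ 2 * π) :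
    sin (x / 2) ≠ 0 := by
  intro h
  have := (sin_eq_zero_iff_of_lt_of_lt (x := x / 2 - π) (by linarith) (by linarith)).1
    (by rw [sin_sub_pi, h, neg_zero])
  exact h2π (by linarith)

section psiSum

variable {n : ℕ} {b r : ℕ → ℝ} {s : Finset ℕ} {t τ : ℝ}

theorem sum_psiTerm_pos (hs : s.Nonempty) (hb : ∀ i ∈ s, 0 < b i) (hr : ∀ i ∈ s, r i ≠ 0)
    (hτ : 0 < τ) (h2π : ∀ i ∈ s, b i * τ < 2 * π) :
    0 < ∑ i ∈ s, r i ^ 2 / 2 * psiTerm (b i) τ :=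
  sum_pos (fun i hi => mul_pos (by have := hr i hi; positivity)
    (psiTerm_pos (hb i hi) hτ (h2π i hi))) hs

theorem continuousAt_sum_psiTerm (h : ∀ i ∈ s, sin (b i * τ / 2) ≠ 0) :
    ContinuousAt (fun τ => ∑ i ∈ s, r i ^ 2 / 2 * psiTerm (b i) τ) τ :=
  tendsto_finsetSum s fun i hi => continuousAt_const.mul (continuousAt_psiTerm (h i hi))

theorem psiSum_update_one (hn : 1 ≤ n) (r₁ τ : ℝ) :
    psiSum n b (Function.update r 1 r₁) τ =
      r₁ ^ 2 / 2 * psiTerm (b 1) τ + ∑ i ∈ Finset.Icc 2 n, r i ^ 2 / 2 * psiTerm (b i) τ := by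
  rw [psiSum_eq_sum_psiTerm, ← Finset.insert_Icc_add_one_left_eq_Icc hn,
    sum_insert (by simp), Function.update_self]
  congr 1
  refine sum_congr rfl fun i hi => ?_
  rw [Function.update_of_ne (by simp only [Finset.mem_Icc] at hi; omega)]

/-- Every term of `ψ` is positive while all `bᵢ τ < 2π`, and `τ = 2π / b₁` is excluded. -/
theorem two_pi_div_lt_of_mem_psiZeroSet (hn : 1 ≤ n) (hb : ∀ i ∈ Finset.Icc 1 n, 0 < b i)
    (hmax : ∀ i ∈ Finset.Icc 1 n, b i ≤ b 1) (hr : ∀ i ∈ Finset.Icc 1 n, 0 < r i)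
    (hτ : τ ∈ psiZeroSet n b r) : 2 * π / b 1 < τ := by
  obtain ⟨hτ, hsin, hψ⟩ := hτ
  have h1 : 1 ∈ Finset.Icc 1 n := Finset.mem_Icc.2 ⟨le_rfl, hn⟩
  have hb1 := hb 1 h1
  refine lt_of_not_ge fun hle => ?_
  have hlt : b 1 * τ < 2 * π := by
    rw [← lt_div_iff₀' hb1]
    refine hle.lt_of_ne fun h => hsin 1 h1 ?_
    rw [h, mul_div_cancel₀ _ hb1.ne', mul_div_cancel_left₀ _ two_ne_zero, sin_pi]
  have hpos := sum_psiTerm_pos ⟨1, h1⟩ hb (fun i hi => (hr i hi).ne') hτ fun i hi =>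
    (mul_le_mul_of_nonneg_right (hmax i hi) hτ.le).trans_lt hlt
  rw [← psiSum_eq_sum_psiTerm, hψ] at hpos
  exact hpos.false

theorem sin_ne_zero_of_mem_Ioc (hb : ∀ i ∈ Finset.Icc 1 n, 0 < b i)
    (htail : ∀ i ∈ Finset.Icc 2 n, b i * t < 2 * π) (ht : b 1 * t < 4 * π) :
    ∀ τ ∈ Ioc (2 * π / b 1) t, ∀ i ∈ Finset.Icc 1 n, sin (b i * τ / 2) ≠ 0 := by
  intro τ hτ i hi
  have hb1 := hb 1 (Finset.mem_Icc.2 ⟨le_rfl, by simp only [Finset.mem_Icc] at hi; omega⟩)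
  have hcτ : 2 * π < b 1 * τ := (div_lt_iff₀' hb1).1 hτ.1
  have hτ0 : 0 < τ := (by positivity : 0 < 2 * π / b 1).trans hτ.1
  have hle : b i * τ ≤ b i * t := mul_le_mul_of_nonneg_left hτ.2 (hb i hi).le
  rcases eq_or_ne i 1 with rfl | hi1
  · exact sin_half_ne_zero (by linarith [pi_pos]) (by linarith) hcτ.ne'
  · have := htail i (by simp only [Finset.mem_Icc] at hi ⊢; omega)
    exact sin_half_ne_zero (mul_pos (hb i hi) hτ0) (by linarith [pi_pos]) (by linarith)

theorem tendsto_psiSum_update_one_atBot (hn : 1 ≤ n) (hb : ∀ i ∈ Finset.Icc 1 n, 0 < b i)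
    (htail : ∀ i ∈ Finset.Icc 2 n, b i * (2 * π / b 1) < 2 * π) {r₁ : ℝ} (hr₁ : r₁ ≠ 0) :
    Tendsto (psiSum n b (Function.update r 1 r₁)) (𝓝[>] (2 * π / b 1)) atBot := by
  have hb1 := hb 1 (Finset.mem_Icc.2 ⟨le_rfl, hn⟩)
  have hsin : ∀ i ∈ Finset.Icc 2 n, sin (b i * (2 * π / b 1) / 2) ≠ 0 := fun i hi =>
    sin_half_ne_zero (mul_pos (hb i (Finset.Icc_subset_Icc_left one_le_two hi)) (by positivity))
      (by linarith [htail i hi, pi_pos]) (htail i hi).ne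
  have hfirst := (tendsto_psiTerm_nhdsGT_atBot hb1).const_mul_atBot (by positivity : 0 < r₁ ^ 2 / 2)
  have hrest := tendsto_nhdsWithin_of_tendsto_nhds (s := Ioi (2 * π / b 1))
    (continuousAt_sum_psiTerm (r := r) hsin)
  exact (hfirst.atBot_add hrest).congr fun τ => (psiSum_update_one hn r₁ τ).symm

theorem exists_mem_psiZeroSet_of_psiSum_pos (hn : 1 ≤ n) (hb : ∀ i ∈ Finset.Icc 1 n, 0 < b i)
    (htail : ∀ i ∈ Finset.Icc 2 n, b i * t < 2 * π) (hct : 2 * π / b 1 < t) (ht : b 1 * t < 4 * π)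
    {r₁ : ℝ} (hr₁ : r₁ ≠ 0) (hψ : 0 < psiSum n b (Function.update r 1 r₁) t) :
    ∃ z ∈ Ioc (2 * π / b 1) t, z ∈ psiZeroSet n b (Function.update r 1 r₁) := by
  have hsin := sin_ne_zero_of_mem_Ioc hb htail ht
  have hcont : ContinuousOn (psiSum n b (Function.update r 1 r₁)) (Ioc (2 * π / b 1) t) :=
    fun τ hτ => (continuousAt_sum_psiTerm (hsin τ hτ)).continuousWithinAt
  have hlim := tendsto_psiSum_update_one_atBot (r := r) hn hb (fun i hi =>
    (mul_lt_mul_of_pos_left hct (hb i (Finset.Icc_subset_Icc_left one_le_two hi))).trans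
      (htail i hi)) hr₁
  obtain ⟨z, hz, hz0⟩ := isPreconnected_Ioc.intermediate_value_Iic (right_mem_Ioc.2 hct)
    (le_principal_iff.2 (Ioc_mem_nhdsGT hct)) hcont hlim hψ.le
  have hb1 := hb 1 (Finset.mem_Icc.2 ⟨le_rfl, hn⟩)
  exact ⟨z, hz, (by positivity : 0 < 2 * π / b 1).trans hz.1, hsin z hz, hz0⟩

theorem eventually_psiSum_update_one_pos (hn : 1 ≤ n)
    (htail : 0 < ∑ i ∈ Finset.Icc 2 n, r i ^ 2 / 2 * psiTerm (b i) t) :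
    ∀ᶠ r₁ in 𝓝 0, 0 < psiSum n b (Function.update r 1 r₁) t := by
  have hcont : Continuous fun r₁ : ℝ => psiSum n b (Function.update r 1 r₁) t := by
    simp_rw [psiSum_update_one hn]
    fun_prop
  refine continuousAt_const.eventually_lt hcont.continuousAt ?_
  simpa [psiSum_update_one hn] using htail

theorem update_one_pos (hr : ∀ i ∈ Finset.Icc 2 n, 0 < r i) {r₁ : ℝ} (hr₁ : 0 < r₁) :
    ∀ i ∈ Finset.Icc 1 n, 0 < Function.update r 1 r₁ i := by
  intro i hi
  rcases eq_or_ne i 1 with rfl | hi1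
  · simpa using hr₁
  · rw [Function.update_of_ne hi1]
    exact hr i (by simp only [Finset.mem_Icc] at hi ⊢; omega)

theorem eventually_exists_mem_psiZeroSet_lt (hn : 2 ≤ n) (hb : ∀ i ∈ Finset.Icc 1 n, 0 < b i)
    (h12 : b 2 < b 1) (hle : ∀ i ∈ Finset.Icc 2 n, b i ≤ b 2) (hr : ∀ i ∈ Finset.Icc 2 n, 0 < r i)
    {u : ℝ} (hu : 2 * π / b 1 < u) :
    ∀ᶠ r₁ in 𝓝[>] 0, ∃ z ∈ psiZeroSet n b (Function.update r 1 r₁), z < u := by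
  have hb1 : 0 < b 1 := hb 1 (Finset.mem_Icc.2 ⟨le_rfl, one_le_two.trans hn⟩)
  have hb2 : 0 < b 2 := hb 2 (Finset.mem_Icc.2 ⟨one_le_two, hn⟩)
  have hc : 0 < 2 * π / b 1 := by positivity
  obtain ⟨t, hct, ht⟩ := exists_between (lt_min hu (lt_min
    (div_lt_div_of_pos_left (by positivity) hb2 h12) (lt_two_mul_self hc)))
  have htail : ∀ i ∈ Finset.Icc 2 n, b i * t < 2 * π := fun i hi =>
    (mul_le_mul_of_nonneg_right (hle i hi) (hc.trans hct).le).trans_lt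
      ((lt_div_iff₀' hb2).1 ((ht.trans_le (min_le_right _ _)).trans_le (min_le_left _ _)))
  have ht4π : b 1 * t < 4 * π := by
    have := (ht.trans_le (min_le_right _ _)).trans_le (min_le_right _ _)
    rw [← mul_div_assoc, lt_div_iff₀' hb1] at this
    linarith
  have htail_pos := sum_psiTerm_pos (r := r) ⟨2, Finset.mem_Icc.2 ⟨le_rfl, hn⟩⟩
    (fun i hi => hb i (Finset.Icc_subset_Icc_left one_le_two hi)) (fun i hi => (hr i hi).ne')
    (hc.trans hct) htail
  have h1n : 1 ≤ n := one_le_two.trans hn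
  filter_upwards [self_mem_nhdsWithin,
    nhdsWithin_le_nhds (eventually_psiSum_update_one_pos h1n htail_pos)] with r₁ hr₁ hψt
  obtain ⟨z, hz, hzero⟩ := exists_mem_psiZeroSet_of_psiSum_pos h1n hb htail hct ht4π hr₁.ne' hψt
  exact ⟨z, hzero, hz.2.trans_lt (ht.trans_le (min_le_left _ _))⟩

end psiSum

/-- Fix `n ≥ 2` and reals `b₁ > b₂ ≥ … ≥ bₙ > 0` and
`r₂, …, rₙ > 0`. Let `τ₁(r)` denote the least `τ > 0` such that
`sin(bᵢτ/2) ≠ 0` for all `i` and `ψ(τ, r) = 0` (for `r` with all coordinates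
positive). Then `τ₁(r₁, r₂, …, rₙ) → 2π/b₁` as `r₁ → 0⁺`. -/
theorem statement10 (n : ℕ) (hn : 2 ≤ n) (b : ℕ → ℝ)
    (hpos : ∀ i ∈ Finset.Icc 1 n, 0 < b i)
    (h12 : b 2 < b 1)
    (hanti : ∀ i j, 2 ≤ i → i ≤ j → j ≤ n → b j ≤ b i)
    (tau1 : (ℕ → ℝ) → ℝ)
    (htau1 : ∀ r : ℕ → ℝ, (∀ i ∈ Finset.Icc 1 n, 0 < r i) →
      IsLeast {τ : ℝ | 0 < τ ∧ (∀ i ∈ Finset.Icc 1 n, Real.sin (b i * τ / 2) ≠ 0) ∧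
        psiSum n b r τ = 0} (tau1 r))
    (r : ℕ → ℝ) (hr : ∀ i ∈ Finset.Icc 2 n, 0 < r i) :
    Filter.Tendsto (fun r₁ : ℝ => tau1 (Function.update r 1 r₁))
      (nhdsWithin 0 (Set.Ioi 0)) (nhds (2 * Real.pi / b 1)) := by
  have h1n : 1 ≤ n := one_le_two.trans hn
  have hle : ∀ i ∈ Finset.Icc 2 n, b i ≤ b 2 := fun i hi =>
    hanti 2 i le_rfl (Finset.mem_Icc.1 hi).1 (Finset.mem_Icc.1 hi).2
  have hmax : ∀ i ∈ Finset.Icc 1 n, b i ≤ b 1 := fun i hi => by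
    rcases eq_or_ne i 1 with rfl | hi1
    · exact le_rfl
    · exact (hle i (by simp only [Finset.mem_Icc] at hi ⊢; omega)).trans h12.le
  refine tendsto_order.2 ⟨fun l hl => ?_, fun u hu => ?_⟩
  · filter_upwards [self_mem_nhdsWithin] with r₁ hr₁
    exact hl.trans (two_pi_div_lt_of_mem_psiZeroSet h1n hpos hmax (update_one_pos hr hr₁)
      (htau1 _ (update_one_pos hr hr₁)).1)
  · filter_upwards [self_mem_nhdsWithin, eventually_exists_mem_psiZeroSet_lt hn hpos h12 hle hr hu]
      with r₁ hr₁ ⟨z, hz, hzu⟩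
    exact ((htau1 _ (update_one_pos hr hr₁)).2 hz).trans_lt hzu
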